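/- Consider the 3-block ADMM iterates (eq. finalupdate): S^{(t+1)} = (H+ρ_t I)^{-1}(H(W − L^{(t)}) − V^{(t)} + ρ_t D^{(t)}), L^{(t+1)} = H^{-1/2}P_r(H^{1/2}(W − S^{(t+1)})), D^{(t+1)} = P_S(S^{(t+1)} + V^{(t)}/ρ_t), V^{(t+1)} = V^{(t)} + ρ_t(S^{(t+1)} − D^{(t+1)}), with H = XᵀX + λI, λ > 0, nondecreasing ρ_t > 0. Let C_F ≥ 1 bound ‖H^{-1/2}‖₂, ‖H‖₂, and ‖HW‖_F. Then for all t ≥ 1, ‖L^{(t)}‖_F ≤ C_F³ (1 + ‖D^{(t)}‖_F + ‖V^{(t)}‖_F/ρ_{t-1} + ‖V^{(t-1)}‖_F/ρ_{t-1}). -/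

import Mathlib

/-!
Along the `L`-update,
`‖L⁽ᵗ⁺¹⁾‖_F ≤ ‖R⁻¹‖₂ ‖P_r(R(W - S⁽ᵗ⁺¹⁾))‖_F ≤ ‖R⁻¹‖₂ ‖R(W - S⁽ᵗ⁺¹⁾)‖_F`:
a best rank-`r` approximation `P` of `A` is in particular the best approximation of `A` on the
line `ℝ P`, so `A - P ⟂ P` and `‖P‖_F ≤ ‖A‖_F`. As `R (W - S) = R⁻¹ H (W - S)` (because
`R² = H`), `‖R(W - S)‖_F ≤ C_F (‖H W‖_F + ‖H‖₂ ‖S‖_F) ≤ C_F² (1 + ‖S‖_F)`, and the dual update gives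
`S⁽ᵗ⁺¹⁾ = D⁽ᵗ⁺¹⁾ + (V⁽ᵗ⁺¹⁾ - V⁽ᵗ⁾) / ρ_t`.
-/

open Matrix

noncomputable def frobNorm {n m : ℕ} (A : Matrix (Fin n) (Fin m) ℝ) : ℝ :=
  Real.sqrt (∑ i, ∑ j, (A i j) ^ 2)

/-- The spectral (ℓ₂ operator) norm of a square real matrix. -/
noncomputable def specNorm {n : ℕ} (A : Matrix (Fin n) (Fin n) ℝ) : ℝ :=
  ‖LinearMap.toContinuousLinearMap (Matrix.toEuclideanLin A)‖

open RealInnerProductSpace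

section InnerProduct

variable {E : Type*} [NormedAddCommGroup E] [InnerProductSpace ℝ E]

theorem real_inner_eq_zero_of_forall_norm_le_norm_add_smul {x y : E}
    (h : ∀ s : ℝ, ‖x‖ ≤ ‖x + s • y‖) : ⟪x, y⟫ = 0 := by
  have hquad : ∀ s : ℝ, 0 ≤ ‖y‖ ^ 2 * (s * s) + 2 * ⟪x, y⟫ * s + 0 := fun s => by
    have := pow_le_pow_left₀ (norm_nonneg x) (h s) 2
    rw [norm_add_sq_real, real_inner_smul_right, norm_smul, mul_pow, Real.norm_eq_abs,
      sq_abs] at this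
    linarith
  have hdiscrim := discrim_le_zero hquad
  rw [discrim] at hdiscrim
  nlinarith [sq_nonneg ⟪x, y⟫]

theorem norm_le_of_forall_norm_sub_le_norm_sub_smul {a p : E}
    (h : ∀ c : ℝ, ‖a - p‖ ≤ ‖a - c • p‖) : ‖p‖ ≤ ‖a‖ := by
  have horth : ⟪a - p, p⟫ = 0 :=
    real_inner_eq_zero_of_forall_norm_le_norm_add_smul fun s => by
      have hline : a - (1 - s) • p = a - p + s • p := by module
      simpa only [hline] using h (1 - s)
  have hpyth := norm_add_sq_eq_norm_sq_add_norm_sq_real horth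
  rw [sub_add_cancel] at hpyth
  nlinarith [norm_nonneg p, norm_nonneg a, norm_nonneg (a - p)]

end InnerProduct

section Frobenius

variable {n m : ℕ}

def flatten : Matrix (Fin n) (Fin m) ℝ →ₗ[ℝ] EuclideanSpace ℝ (Fin n × Fin m) where
  toFun A := WithLp.toLp 2 fun p => A p.1 p.2
  map_add' _ _ := rfl
  map_smul' _ _ := rfl

theorem frobNorm_eq_norm_flatten (A : Matrix (Fin n) (Fin m) ℝ) :
    frobNorm A = ‖flatten A‖ := by
  rw [EuclideanSpace.norm_eq, frobNorm, ← Finset.sum_product']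
  simp only [Real.norm_eq_abs, sq_abs]
  rfl

theorem frobNorm_nonneg (A : Matrix (Fin n) (Fin m) ℝ) : 0 ≤ frobNorm A :=
  Real.sqrt_nonneg _

theorem frobNorm_add_le (A B : Matrix (Fin n) (Fin m) ℝ) :
    frobNorm (A + B) ≤ frobNorm A + frobNorm B := by
  simpa only [frobNorm_eq_norm_flatten, map_add] using norm_add_le (flatten A) (flatten B)

theorem frobNorm_sub_le (A B : Matrix (Fin n) (Fin m) ℝ) :
    frobNorm (A - B) ≤ frobNorm A + frobNorm B := by
  simpa only [frobNorm_eq_norm_flatten, map_sub] using norm_sub_le (flatten A) (flatten B)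

theorem frobNorm_smul (c : ℝ) (A : Matrix (Fin n) (Fin m) ℝ) :
    frobNorm (c • A) = |c| * frobNorm A := by
  simpa only [frobNorm_eq_norm_flatten, map_smul, Real.norm_eq_abs] using norm_smul c (flatten A)

end Frobenius

section Spectral

variable {n m : ℕ}

theorem specNorm_nonneg (M : Matrix (Fin n) (Fin n) ℝ) : 0 ≤ specNorm M := norm_nonneg _

theorem norm_toLp_mulVec_le (M : Matrix (Fin n) (Fin n) ℝ) (v : Fin n → ℝ) :
    ‖(WithLp.toLp 2 (M *ᵥ v) : EuclideanSpace ℝ (Fin n))‖ ≤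
      specNorm M * ‖(WithLp.toLp 2 v : EuclideanSpace ℝ (Fin n))‖ :=
  (LinearMap.toContinuousLinearMap (toEuclideanLin M)).le_opNorm _

theorem frobNorm_sq_eq_sum_norm_col_sq (A : Matrix (Fin n) (Fin m) ℝ) :
    frobNorm A ^ 2 = ∑ j, ‖(WithLp.toLp 2 (Aᵀ j) : EuclideanSpace ℝ (Fin n))‖ ^ 2 := by
  rw [frobNorm, Real.sq_sqrt (by positivity), Finset.sum_comm]
  simp only [EuclideanSpace.norm_sq_eq, Real.norm_eq_abs, sq_abs]
  rfl

theorem frobNorm_mul_le (M : Matrix (Fin n) (Fin n) ℝ) (A : Matrix (Fin n) (Fin m) ℝ) :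
    frobNorm (M * A) ≤ specNorm M * frobNorm A := by
  rw [← pow_le_pow_iff_left₀ (frobNorm_nonneg _)
    (mul_nonneg (specNorm_nonneg M) (frobNorm_nonneg A)) two_ne_zero,
    mul_pow, frobNorm_sq_eq_sum_norm_col_sq, frobNorm_sq_eq_sum_norm_col_sq, Finset.mul_sum]
  refine Finset.sum_le_sum fun j _ => ?_
  rw [← mul_pow]
  exact pow_le_pow_left₀ (norm_nonneg _) (norm_toLp_mulVec_le M (Aᵀ j)) 2

theorem frobNorm_mul_le_of_specNorm_le {C : ℝ} {M : Matrix (Fin n) (Fin n) ℝ}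
    (hM : specNorm M ≤ C) (A : Matrix (Fin n) (Fin m) ℝ) :
    frobNorm (M * A) ≤ C * frobNorm A :=
  (frobNorm_mul_le M A).trans (mul_le_mul_of_nonneg_right hM (frobNorm_nonneg A))

end Spectral

theorem frobNorm_le_of_isBestRankApprox {n m r : ℕ} {A P : Matrix (Fin n) (Fin m) ℝ}
    (hrank : P.rank ≤ r)
    (hbest : ∀ M : Matrix (Fin n) (Fin m) ℝ, M.rank ≤ r →
      frobNorm (A - P) ≤ frobNorm (A - M)) :
    frobNorm P ≤ frobNorm A := by
  simp only [frobNorm_eq_norm_flatten, map_sub] at hbest ⊢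
  refine norm_le_of_forall_norm_sub_le_norm_sub_smul fun c => ?_
  have hrank_smul : (c • P).rank ≤ r :=
    (smul_eq_diagonal_mul P c ▸ rank_mul_le_right _ _).trans hrank
  simpa only [map_smul] using hbest (c • P) hrank_smul

theorem frobNorm_le_of_dual_update {n m : ℕ} {ρ : ℝ} (hρ : 0 < ρ)
    {S D V V' : Matrix (Fin n) (Fin m) ℝ} (hV' : V' = V + ρ • (S - D)) :
    frobNorm S ≤ frobNorm D + frobNorm V' / ρ + frobNorm V / ρ := by
  have hS : S = D + ρ⁻¹ • (V' - V) := by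
    rw [hV', add_sub_cancel_left, inv_smul_smul₀ hρ.ne', add_sub_cancel]
  calc frobNorm S ≤ frobNorm D + |ρ⁻¹| * frobNorm (V' - V) := by
        rw [hS, ← frobNorm_smul]; exact frobNorm_add_le _ _
    _ ≤ frobNorm D + ρ⁻¹ * (frobNorm V' + frobNorm V) := by
        rw [abs_of_pos (inv_pos.mpr hρ)]; gcongr; exact frobNorm_sub_le _ _
    _ = frobNorm D + frobNorm V' / ρ + frobNorm V / ρ := by ring

theorem stmt11_general (n m r : ℕ)
    (W : Matrix (Fin n) (Fin m) ℝ)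
    (H R : Matrix (Fin n) (Fin n) ℝ)
    (hR : R.PosDef) (hRR : R * R = H)
    (ρ : ℕ → ℝ) (hρpos : ∀ t, 0 < ρ t)
    -- `Pr` is the Frobenius-optimal rank-`r` projection
    (Pr : Matrix (Fin n) (Fin m) ℝ → Matrix (Fin n) (Fin m) ℝ)
    (hPr : ∀ A : Matrix (Fin n) (Fin m) ℝ, (Pr A).rank ≤ r ∧
      ∀ M : Matrix (Fin n) (Fin m) ℝ, M.rank ≤ r →
        frobNorm (A - Pr A) ≤ frobNorm (A - M))
    -- the 3-block ADMM iterates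
    (S L D V : ℕ → Matrix (Fin n) (Fin m) ℝ)
    (hL : ∀ t, L (t + 1) = R⁻¹ * Pr (R * (W - S (t + 1))))
    (hV : ∀ t, V (t + 1) = V t + ρ t • (S (t + 1) - D (t + 1)))
    (CF : ℝ)
    (hCF1 : specNorm R⁻¹ ≤ CF) (hCF2 : specNorm H ≤ CF) (hCF3 : frobNorm (H * W) ≤ CF) :
    ∀ t ≥ 1, frobNorm (L t) ≤
      CF ^ 3 * (1 + frobNorm (D t) + frobNorm (V t) / ρ (t - 1) +
        frobNorm (V (t - 1)) / ρ (t - 1)) := by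
  intro t ht
  obtain ⟨s, rfl⟩ := Nat.exists_eq_add_of_le' ht
  rw [Nat.add_sub_cancel]
  have hCF0 : 0 ≤ CF := (specNorm_nonneg H).trans hCF2
  have hRinvH : R⁻¹ * H = R := by
    rw [← hRR, ← Matrix.mul_assoc, nonsing_inv_mul R ((isUnit_iff_isUnit_det R).mp hR.isUnit),
      Matrix.one_mul]
  calc frobNorm (L (s + 1)) ≤ CF * frobNorm (Pr (R * (W - S (s + 1)))) :=
        hL s ▸ frobNorm_mul_le_of_specNorm_le hCF1 _
    _ ≤ CF * frobNorm (R⁻¹ * (H * (W - S (s + 1)))) := by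
        rw [← Matrix.mul_assoc, hRinvH]
        gcongr
        exact frobNorm_le_of_isBestRankApprox (hPr _).1 (hPr _).2
    _ ≤ CF * (CF * (CF + CF * frobNorm (S (s + 1)))) := by
        gcongr
        refine (frobNorm_mul_le_of_specNorm_le hCF1 _).trans (mul_le_mul_of_nonneg_left ?_ hCF0)
        rw [Matrix.mul_sub]
        linarith [frobNorm_sub_le (H * W) (H * S (s + 1)),
          frobNorm_mul_le_of_specNorm_le hCF2 (S (s + 1))]
    _ = CF ^ 3 * (1 + frobNorm (S (s + 1))) := by ring
    _ ≤ _ := by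
        gcongr CF ^ 3 * ?_
        linarith [frobNorm_le_of_dual_update (hρpos s) (hV s)]

theorem stmt11 (N n m r : ℕ) (X : Matrix (Fin N) (Fin n) ℝ)
    (W : Matrix (Fin n) (Fin m) ℝ) (l : ℝ) (hl : 0 < l)
    (H R : Matrix (Fin n) (Fin n) ℝ)
    (hHdef : H = Xᵀ * X + l • (1 : Matrix (Fin n) (Fin n) ℝ))
    (hR : R.PosDef) (hRR : R * R = H)
    (ρ : ℕ → ℝ) (hρpos : ∀ t, 0 < ρ t) (hρmono : Monotone ρ)
    -- `Pr` is the Frobenius-optimal rank-`r` projection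
    (Pr : Matrix (Fin n) (Fin m) ℝ → Matrix (Fin n) (Fin m) ℝ)
    (hPr : ∀ A : Matrix (Fin n) (Fin m) ℝ, (Pr A).rank ≤ r ∧
      ∀ M : Matrix (Fin n) (Fin m) ℝ, M.rank ≤ r →
        frobNorm (A - Pr A) ≤ frobNorm (A - M))
    -- `PS` is the (magnitude-based) Frobenius projection onto the sparsity set `𝒮`
    (𝒮 : Set (Matrix (Fin n) (Fin m) ℝ))
    (PS : Matrix (Fin n) (Fin m) ℝ → Matrix (Fin n) (Fin m) ℝ)
    (hPS : ∀ A : Matrix (Fin n) (Fin m) ℝ, PS A ∈ 𝒮 ∧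
      ∀ D ∈ 𝒮, frobNorm (A - PS A) ≤ frobNorm (A - D))
    -- the 3-block ADMM iterates
    (S L D V : ℕ → Matrix (Fin n) (Fin m) ℝ)
    (hS : ∀ t, S (t + 1) =
      (H + ρ t • (1 : Matrix (Fin n) (Fin n) ℝ))⁻¹ * (H * (W - L t) - V t + ρ t • D t))
    (hL : ∀ t, L (t + 1) = R⁻¹ * Pr (R * (W - S (t + 1))))
    (hD : ∀ t, D (t + 1) = PS (S (t + 1) + (ρ t)⁻¹ • V t))
    (hV : ∀ t, V (t + 1) = V t + ρ t • (S (t + 1) - D (t + 1)))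
    (CF : ℝ) (hCF : 1 ≤ CF)
    (hCF1 : specNorm R⁻¹ ≤ CF) (hCF2 : specNorm H ≤ CF) (hCF3 : frobNorm (H * W) ≤ CF) :
    ∀ t ≥ 1, frobNorm (L t) ≤
      CF ^ 3 * (1 + frobNorm (D t) + frobNorm (V t) / ρ (t - 1) +
        frobNorm (V (t - 1)) / ρ (t - 1)) :=
  stmt11_general n m r W H R hR hRR ρ hρpos Pr hPr S L D V hL hV CF hCF1 hCF2 hCF3
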